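/- Any extension of a free group by a nilpotent group is residually solvable: if K ⊴ G with K free and G/K nilpotent, then G is residually solvable. -/

import Mathlib

/-!
Since `G ⧸ K` is nilpotent, hence solvable, some term of the derived series of `G` lies in `K`,
and from there on the derived series of `G` runs inside that of `K`; so it suffices that free
groups are residually solvable. They are even residually nilpotent, by a variant of the Magnus
representation on the free `ℤ`-module on words: a letter `x` acts by `1 + Sₓ`, where `Sₓ` prepends
`x` to the words not beginning with `x` and kills the others. As `Sₓ² = 0`, `xᵉ` acts by
`1 + e Sₓ`, so a reduced word `x₁^e₁ ⋯ x_r^e_r` sends the empty word to a vector whose coefficient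
at `x₁ ⋯ x_r` is `e₁ ⋯ e_r ≠ 0`. On the other hand `Sₓ` raises word length, so an element of the
`r`-th term of the lower central series acts by `1 +` an operator raising length by more than `r`.
-/

/-- A group is residually solvable iff every nontrivial element survives in some
solvable quotient; equivalently, the intersection of the derived series is trivial. -/
def ResiduallySolvable (G : Type*) [Group G] : Prop :=
  ⨅ n : ℕ, derivedSeries G n = ⊥

open scoped commutatorElement

section UnitsFiltration

variable {R : Type*} [Ring R] {F : ℕ → AddSubgroup R} [SetLike.GradedMonoid F]

def unitsFiltration (hF : Antitone F) (n : ℕ) : Subgroup Rˣ :=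
  Submonoid.units
    { carrier := {x | x - 1 ∈ F (n + 1)}
      mul_mem' := fun {a b} ha hb => by
        have h : a * b - 1 = (a - 1) * (b - 1) + (a - 1) + (b - 1) := by noncomm_ring
        rw [Set.mem_ofPred_eq, h]
        exact add_mem (add_mem (hF (by omega) (SetLike.mul_mem_graded ha hb)) ha) hb
      one_mem' := by simp }

variable {hF : Antitone F}

theorem mem_unitsFiltration {n : ℕ} {u : Rˣ} :
    u ∈ unitsFiltration hF n ↔ (u : R) - 1 ∈ F (n + 1) ∧ ((u⁻¹ : Rˣ) : R) - 1 ∈ F (n + 1) :=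
  Iff.rfl

theorem val_inv_mem_of_mem_unitsFiltration {n : ℕ} {u : Rˣ} (hu : u ∈ unitsFiltration hF n) :
    ((u⁻¹ : Rˣ) : R) ∈ F 0 := by
  simpa using add_mem (hF (Nat.zero_le _) hu.2) SetLike.GradedOne.one_mem

theorem val_commutator_sub_one_mem {a b : ℕ} {g h : Rˣ} (hg : g ∈ unitsFiltration hF a)
    (hh : h ∈ unitsFiltration hF b) : ((⁅g, h⁆ : Rˣ) : R) - 1 ∈ F (a + b + 2) := by
  have hgh : ((g : R) - 1) * (h - 1) ∈ F (a + b + 2) :=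
    (by omega : a + 1 + (b + 1) = a + b + 2) ▸ SetLike.mul_mem_graded hg.1 hh.1
  have hhg : ((h : R) - 1) * (g - 1) ∈ F (a + b + 2) :=
    (by omega : b + 1 + (a + 1) = a + b + 2) ▸ SetLike.mul_mem_graded hh.1 hg.1
  have hinv : ((g⁻¹ : Rˣ) : R) * ((h⁻¹ : Rˣ) : R) ∈ F 0 :=
    SetLike.mul_mem_graded (val_inv_mem_of_mem_unitsFiltration hg)
      (val_inv_mem_of_mem_unitsFiltration hh)
  have hcomm : ((⁅g, h⁆ : Rˣ) : R) - 1 =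
      ((g - 1) * (h - 1) - (h - 1) * (g - 1)) * (((g⁻¹ : Rˣ) : R) * ((h⁻¹ : Rˣ) : R)) := by
    calc ((⁅g, h⁆ : Rˣ) : R) - 1
        = g * h * ((g⁻¹ : Rˣ) : R) * ((h⁻¹ : Rˣ) : R)
            - h * (g * ((g⁻¹ : Rˣ) : R)) * ((h⁻¹ : Rˣ) : R) := by
          simp [commutatorElement_def]
      _ = _ := by noncomm_ring
  rw [hcomm, ← add_zero (a + b + 2)]
  exact SetLike.mul_mem_graded (sub_mem hgh hhg) hinv

theorem commutator_mem_unitsFiltration {a b : ℕ} {g h : Rˣ} (hg : g ∈ unitsFiltration hF a)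
    (hh : h ∈ unitsFiltration hF b) : ⁅g, h⁆ ∈ unitsFiltration hF (a + b + 1) := by
  refine mem_unitsFiltration.mpr ⟨val_commutator_sub_one_mem hg hh, ?_⟩
  rw [commutatorElement_inv, add_comm a b]
  exact val_commutator_sub_one_mem hh hg

theorem lowerCentralSeries_unitsFiltration_le (n : ℕ) :
    (unitsFiltration hF 0).lowerCentralSeries n ≤ unitsFiltration hF n := by
  induction n with
  | zero => exact le_rfl
  | succ n ih =>
    rw [Subgroup.lowerCentralSeries_succ, Subgroup.commutator_le]
    intro g hg h hh
    simpa using commutator_mem_unitsFiltration (ih hg) hh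

end UnitsFiltration

section SquareZero

variable {R : Type*} [Ring R] {S : R}

def Units.oneAddOfMulSelfEqZero (hS : S * S = 0) : Rˣ where
  val := 1 + S
  inv := 1 - S
  val_inv := by rw [mul_sub, add_mul, add_mul, one_mul, mul_one, one_mul, hS]; abel
  inv_val := by rw [mul_add, sub_mul, sub_mul, one_mul, mul_one, one_mul, hS]; abel

theorem Units.val_oneAddOfMulSelfEqZero_zpow (hS : S * S = 0) (e : ℤ) :
    ((oneAddOfMulSelfEqZero hS ^ e : Rˣ) : R) = 1 + e • S := by
  induction e using Int.induction_on with
  | zero => simp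
  | succ n ih =>
    rw [zpow_add_one, Units.val_mul, ih]
    change (1 + (n : ℤ) • S) * (1 + S) = _
    rw [add_mul, one_mul, mul_add, mul_one, smul_mul_assoc, hS, smul_zero, add_zero, add_smul,
      one_smul]
    abel
  | pred n ih =>
    rw [zpow_sub_one, Units.val_mul, ih]
    change (1 + (-(n : ℤ)) • S) * (1 - S) = _
    rw [add_mul, one_mul, mul_sub, mul_one, smul_mul_assoc, hS, smul_zero, sub_zero, sub_smul,
      one_smul]
    abel

end SquareZero

section EndFiltration

variable {R M : Type*} [Ring R] [AddCommGroup M] [Module R M] (Φ : ℕ → Submodule R M)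

def endFiltration (a : ℕ) : AddSubgroup (Module.End R M) where
  carrier := {f | ∀ j, ∀ v ∈ Φ j, f v ∈ Φ (j + a)}
  add_mem' hf hg j v hv := add_mem (hf j v hv) (hg j v hv)
  zero_mem' _ _ _ := zero_mem _
  neg_mem' hf j v hv := neg_mem (hf j v hv)

instance : SetLike.GradedMonoid (endFiltration Φ) where
  one_mem _ _ hv := hv
  mul_mem a b f g hf hg j v hv := by
    rw [Nat.add_comm a b, ← Nat.add_assoc]
    exact hf _ _ (hg j v hv)

variable {Φ}

theorem endFiltration_antitone (hΦ : Antitone Φ) : Antitone (endFiltration Φ) :=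
  fun _ _ hab _ hf j v hv => hΦ (Nat.add_le_add_left hab j) (hf j v hv)

end EndFiltration

section Syllables

variable {β G H : Type*} [Group G] [Group H]

def IsSyllableList (s : List (β × ℤ)) : Prop :=
  s.IsChain (fun p q => p.1 ≠ q.1) ∧ ∀ p ∈ s, p.2 ≠ 0

def syllableProd (f : β → G) (s : List (β × ℤ)) : G :=
  (s.map fun p => f p.1 ^ p.2).prod

theorem syllableProd_nil (f : β → G) : syllableProd f [] = 1 := rfl

theorem syllableProd_cons (f : β → G) (x : β) (e : ℤ) (s : List (β × ℤ)) :
    syllableProd f ((x, e) :: s) = f x ^ e * syllableProd f s := rfl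

theorem map_syllableProd (φ : G →* H) (f : β → G) (s : List (β × ℤ)) :
    φ (syllableProd f s) = syllableProd (φ ∘ f) s := by
  simp [syllableProd, map_list_prod, Function.comp_def]

theorem exists_syllableProd_eq_zpow_mul [DecidableEq β] (f : β → G) (x : β) (e : ℤ)
    {s : List (β × ℤ)} (hs : IsSyllableList s) :
    ∃ t, IsSyllableList t ∧ syllableProd f t = f x ^ e * syllableProd f s := by
  by_cases he : e = 0
  · exact ⟨s, hs, by simp [he]⟩
  match s, hs with
  | [], _ => exact ⟨[(x, e)], ⟨List.isChain_singleton _, by simpa using he⟩, rfl⟩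
  | (y, d) :: s, ⟨hchain, hne⟩ =>
    by_cases hxy : x = y
    · subst hxy
      have hs' : IsSyllableList s :=
        ⟨hchain.tail, fun p hp => hne p (List.mem_cons_of_mem _ hp)⟩
      have hprod : f x ^ e * syllableProd f ((x, d) :: s) = f x ^ (e + d) * syllableProd f s := by
        rw [syllableProd_cons, ← mul_assoc, ← zpow_add]
      by_cases hed : e + d = 0
      · exact ⟨s, hs', by rw [hprod, hed, zpow_zero, one_mul]⟩
      · refine ⟨(x, e + d) :: s, ⟨?_, ?_⟩, by rw [hprod, syllableProd_cons]⟩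
        · cases s with
          | nil => exact List.isChain_singleton _
          | cons q s => exact List.isChain_cons_cons.mpr (List.isChain_cons_cons.mp hchain)
        · rintro p (_ | ⟨_, hp⟩)
          · exact hed
          · exact hs'.2 p hp
    · refine ⟨(x, e) :: (y, d) :: s, ⟨List.IsChain.cons_cons hxy hchain, ?_⟩, rfl⟩
      rintro p (_ | ⟨_, hp⟩)
      · exact he
      · exact hne p hp

theorem FreeGroup.exists_syllableProd_eq (w : FreeGroup β) :
    ∃ s, IsSyllableList s ∧ syllableProd FreeGroup.of s = w := by
  classical
  have hw : w ∈ Subgroup.closure (Set.range FreeGroup.of) := by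
    rw [FreeGroup.closure_range_of]; trivial
  induction hw using Subgroup.closure_induction_left with
  | one => exact ⟨[], ⟨List.isChain_nil, by simp⟩, rfl⟩
  | mul_left _ hx w _ ih =>
    obtain ⟨x, rfl⟩ := hx
    obtain ⟨s, hs, rfl⟩ := ih
    simpa using exists_syllableProd_eq_zpow_mul FreeGroup.of x 1 hs
  | inv_mul_cancel _ hx w _ ih =>
    obtain ⟨x, rfl⟩ := hx
    obtain ⟨s, hs, rfl⟩ := ih
    simpa using exists_syllableProd_eq_zpow_mul FreeGroup.of x (-1) hs

end Syllables

namespace Magnus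

open Finsupp

variable {β : Type*}

variable (β) in
def lengthFiltration (j : ℕ) : Submodule ℤ (List β →₀ ℤ) :=
  supported ℤ ℤ {l | j ≤ l.length}

theorem lengthFiltration_antitone : Antitone (lengthFiltration β) :=
  fun _ _ hij => supported_mono fun _ hl => le_trans hij hl

theorem sub_one_apply_eq_zero_of_mem_unitsFiltration {n : ℕ} {g : (Module.End ℤ (List β →₀ ℤ))ˣ}
    (hg : g ∈ unitsFiltration (endFiltration_antitone lengthFiltration_antitone) n)
    (v : List β →₀ ℤ) {l : List β} (hl : l.length ≤ n) : (g.val - 1) v l = 0 := by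
  refine notMem_support_iff.mp fun hvl => ?_
  have := (mem_supported ℤ _).mp (hg.1 0 v (by simp [lengthFiltration])) hvl
  simp only [Set.mem_ofPred_eq, zero_add] at this
  omega

variable [DecidableEq β]

noncomputable def prepend (x : β) : Module.End ℤ (List β →₀ ℤ) :=
  lmapDomain ℤ ℤ (List.cons x) ∘ₗ (filterAddHom fun l : List β => l.head? ≠ some x).toIntLinearMap

theorem prepend_apply_cons (x : β) (v : List β →₀ ℤ) (l : List β) :
    prepend x v (x :: l) = if l.head? = some x then 0 else v l := by
  change mapDomain _ (filter _ v) _ = _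
  rw [mapDomain_apply List.cons_injective, filter_apply]
  split_ifs <;> simp_all

theorem prepend_apply_of_head?_ne (x : β) (v : List β →₀ ℤ) {l : List β} (hl : l.head? ≠ some x) :
    prepend x v l = 0 := by
  refine mapDomain_of_notMem_range _ _ ?_
  rintro ⟨l', rfl⟩
  exact hl rfl

theorem prepend_mul_self (x : β) : prepend x * prepend x = 0 := by
  refine LinearMap.ext fun v => Finsupp.ext fun l => ?_
  rw [Module.End.mul_apply, LinearMap.zero_apply, Finsupp.coe_zero, Pi.zero_apply]
  by_cases hl : l.head? = some x
  · obtain ⟨l', rfl⟩ := List.head?_eq_some_iff.mp hl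
    rw [prepend_apply_cons]
    split_ifs with hl'
    · rfl
    · exact prepend_apply_of_head?_ne x v hl'
  · exact prepend_apply_of_head?_ne x _ hl

theorem prepend_mem_supported (x : β) {s : Set (List β)} {v : List β →₀ ℤ}
    (hv : v ∈ supported ℤ ℤ s) : prepend x v ∈ supported ℤ ℤ (List.cons x '' s) := by
  rw [← lmapDomain_supported]
  refine Submodule.mem_map_of_mem ((mem_supported ℤ _).mpr ?_)
  exact fun l hl => (mem_supported ℤ v).mp hv (Finset.filter_subset _ _ hl)

theorem prepend_mem_endFiltration (x : β) :
    prepend x ∈ endFiltration (lengthFiltration β) 1 := fun j _ hv =>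
  supported_mono (by rintro _ ⟨l, hl, rfl⟩; exact Nat.succ_le_succ hl) (prepend_mem_supported x hv)

noncomputable def letter (x : β) : (Module.End ℤ (List β →₀ ℤ))ˣ :=
  Units.oneAddOfMulSelfEqZero (prepend_mul_self x)

noncomputable def hom : FreeGroup β →* (Module.End ℤ (List β →₀ ℤ))ˣ :=
  FreeGroup.lift letter

theorem range_hom_le :
    (hom (β := β)).range ≤
      unitsFiltration (endFiltration_antitone lengthFiltration_antitone) 0 := by
  refine FreeGroup.range_lift_le ?_
  rintro _ ⟨x, rfl⟩
  have h := prepend_mem_endFiltration x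
  exact ⟨by simpa [letter, Units.oneAddOfMulSelfEqZero] using h,
    by simpa [letter, Units.oneAddOfMulSelfEqZero] using neg_mem h⟩

theorem syllableProd_letter_cons_apply (x : β) (e : ℤ) (s : List (β × ℤ))
    (v : List β →₀ ℤ) :
    (syllableProd letter ((x, e) :: s)).val v =
      (syllableProd letter s).val v +
        e • prepend x ((syllableProd letter s).val v) := by
  rw [syllableProd_cons, Units.val_mul, letter, Units.val_oneAddOfMulSelfEqZero_zpow,
    Module.End.mul_apply, LinearMap.add_apply, Module.End.one_apply, LinearMap.smul_apply]

theorem syllableProd_letter_single_nil_mem_supported (s : List (β × ℤ)) :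
    (syllableProd letter s).val (single [] 1) ∈
      supported ℤ ℤ {l | l.length ≤ s.length} := by
  induction s with
  | nil => exact single_mem_supported ℤ _ (by simp)
  | cons p s ih =>
    obtain ⟨x, e⟩ := p
    rw [syllableProd_letter_cons_apply]
    refine add_mem (supported_mono (fun l hl => ?_) ih) (Submodule.smul_of_tower_mem _ e ?_)
    · simp only [Set.mem_ofPred_eq, List.length_cons] at hl ⊢
      omega
    · refine supported_mono ?_ (prepend_mem_supported x ih)
      rintro _ ⟨l, hl, rfl⟩
      simpa using hl

theorem syllableProd_letter_single_nil_apply {s : List (β × ℤ)}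
    (hs : s.IsChain fun p q => p.1 ≠ q.1) :
    (syllableProd letter s).val (single [] 1) (s.map Prod.fst) =
      (s.map Prod.snd).prod := by
  induction s with
  | nil => simp [syllableProd_nil]
  | cons p s ih =>
    obtain ⟨x, e⟩ := p
    have hhead : (s.map Prod.fst).head? ≠ some x := by
      cases s with
      | nil => simp
      | cons q s => simpa [eq_comm] using (List.isChain_cons_cons.mp hs).1
    have hlong : (syllableProd letter s).val (single [] 1)
        (x :: s.map Prod.fst) = 0 := by
      refine notMem_support_iff.mp fun hl => ?_
      have := (mem_supported ℤ _).mp (syllableProd_letter_single_nil_mem_supported s) hl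
      simp at this
    rw [List.map_cons, syllableProd_letter_cons_apply, Finsupp.add_apply, Finsupp.smul_apply,
      prepend_apply_cons, if_neg hhead, hlong, ih hs.tail, zero_add, smul_eq_mul,
      List.map_cons, List.prod_cons]

theorem hom_syllableProd_single_nil_apply {s : List (β × ℤ)}
    (hs : s.IsChain fun p q => p.1 ≠ q.1) :
    (hom (syllableProd FreeGroup.of s)).val (single [] 1) (s.map Prod.fst) =
      (s.map Prod.snd).prod := by
  have hletter : hom ∘ FreeGroup.of = (letter : β → _) := funext fun _ => FreeGroup.lift_apply_of
  rw [map_syllableProd, hletter, syllableProd_letter_single_nil_apply hs]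

theorem hom_mem_unitsFiltration {n : ℕ} {w : FreeGroup β}
    (hw : w ∈ (⊤ : Subgroup (FreeGroup β)).lowerCentralSeries n) :
    hom w ∈ unitsFiltration (endFiltration_antitone lengthFiltration_antitone) n := by
  refine lowerCentralSeries_unitsFiltration_le _
    (Subgroup.lowerCentralSeries_mono _ range_hom_le ?_)
  change _ ∈ hom.range.lowerCentralSeries _
  rw [MonoidHom.range_eq_map, ← Subgroup.map_lowerCentralSeries]
  exact Subgroup.mem_map_of_mem _ hw

end Magnus

theorem FreeGroup.iInf_lowerCentralSeries_eq_bot (β : Type*) :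
    ⨅ n, (⊤ : Subgroup (FreeGroup β)).lowerCentralSeries n = ⊥ := by
  classical
  refine eq_bot_iff.mpr fun w hw => Subgroup.mem_bot.mpr ?_
  obtain ⟨s, ⟨hchain, hne⟩, rfl⟩ := FreeGroup.exists_syllableProd_eq w
  suffices s = [] by rw [this, syllableProd_nil]
  by_contra hs
  have hzero := Magnus.sub_one_apply_eq_zero_of_mem_unitsFiltration
    (Magnus.hom_mem_unitsFiltration (Subgroup.mem_iInf.mp hw s.length)) (Finsupp.single [] 1)
    (l := s.map Prod.fst) (by simp)
  rw [LinearMap.sub_apply, Module.End.one_apply, Finsupp.sub_apply,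
    Magnus.hom_syllableProd_single_nil_apply hchain, Finsupp.single_apply,
    if_neg fun h => hs (List.map_eq_nil_iff.mp h.symm), sub_zero] at hzero
  exact List.prod_ne_zero (fun h0 => by
    obtain ⟨p, hp, hp0⟩ := List.mem_map.mp h0
    exact hne p hp hp0) hzero

theorem ResiduallySolvable.of_iInf_lowerCentralSeries_eq_bot {G : Type*} [Group G]
    (h : ⨅ n, (⊤ : Subgroup G).lowerCentralSeries n = ⊥) : ResiduallySolvable G :=
  eq_bot_iff.mpr (h ▸ iInf_mono Subgroup.derived_le_lower_central)

theorem ResiduallySolvable.of_injective {G H : Type*} [Group G] [Group H]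
    (hH : ResiduallySolvable H) {f : G →* H} (hf : Function.Injective f) : ResiduallySolvable G := by
  refine eq_bot_iff.mpr fun x hx => Subgroup.mem_bot.mpr (hf ?_)
  rw [map_one, ← Subgroup.mem_bot, ← hH, Subgroup.mem_iInf]
  exact fun n => map_derivedSeries_le_derivedSeries f n
    (Subgroup.mem_map_of_mem f (Subgroup.mem_iInf.mp hx n))

theorem exists_derivedSeries_le_of_isSolvable_quotient {G : Type*} [Group G] (K : Subgroup G)
    [K.Normal] [Group.IsSolvable (G ⧸ K)] : ∃ d, derivedSeries G d ≤ K := by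
  obtain ⟨d, hd⟩ := Group.IsSolvable.solvable (G := G ⧸ K)
  refine ⟨d, fun x hx => ?_⟩
  rw [← QuotientGroup.ker_mk' K, MonoidHom.mem_ker, ← Subgroup.mem_bot, ← hd]
  exact map_derivedSeries_le_derivedSeries _ d (Subgroup.mem_map_of_mem _ hx)

theorem derivedSeries_add_le_map_subtype {G : Type*} [Group G] {K : Subgroup G} {d : ℕ}
    (hd : derivedSeries G d ≤ K) (n : ℕ) :
    derivedSeries G (d + n) ≤ (derivedSeries K n).map K.subtype := by
  induction n with
  | zero => simpa [← MonoidHom.range_eq_map] using hd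
  | succ n ih =>
    rw [← Nat.add_assoc, derivedSeries_succ, derivedSeries_succ]
    exact Subgroup.commutator_le_map_commutator ih ih

theorem ResiduallySolvable.of_isSolvable_quotient {G : Type*} [Group G] (K : Subgroup G) [K.Normal]
    [Group.IsSolvable (G ⧸ K)] (hK : ResiduallySolvable K) : ResiduallySolvable G := by
  obtain ⟨d, hd⟩ := exists_derivedSeries_le_of_isSolvable_quotient K
  refine eq_bot_iff.mpr fun x hx => ?_
  have hxK : x ∈ K := hd (Subgroup.mem_iInf.mp hx d)
  suffices (⟨x, hxK⟩ : K) ∈ ⨅ n, derivedSeries K n by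
    rw [hK, Subgroup.mem_bot] at this
    exact Subgroup.mem_bot.mpr (congrArg Subtype.val this)
  refine Subgroup.mem_iInf.mpr fun n => ?_
  obtain ⟨y, hy, hyx⟩ := derivedSeries_add_le_map_subtype hd n (Subgroup.mem_iInf.mp hx (d + n))
  rwa [show y = ⟨x, hxK⟩ from Subtype.ext hyx] at hy

/-- An extension of a free group by a nilpotent group is residually
solvable: if `K ⊴ G` with `K` free and `G/K` nilpotent, then `G` is residually
solvable. -/
theorem residuallySolvable_of_free_by_nilpotent
    {G : Type*} [Group G] (K : Subgroup G) [K.Normal] [IsFreeGroup K]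
    (hQ : Group.IsNilpotent (G ⧸ K)) :
    ResiduallySolvable G := by
  have hK : ResiduallySolvable K :=
    (ResiduallySolvable.of_iInf_lowerCentralSeries_eq_bot
      (FreeGroup.iInf_lowerCentralSeries_eq_bot _)).of_injective
      (f := (IsFreeGroup.toFreeGroup K).toMonoidHom) (IsFreeGroup.toFreeGroup K).injective
  exact ResiduallySolvable.of_isSolvable_quotient K hK
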